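/- arXiv:2106.09806 — 6 statements merged into one kernel-verified Lean document; each statement's English description precedes it below -/
import Mathlib

section
/- For every polynomial p with complex coefficients of degree strictly less than k, the Lanczos-FA approximation is exact: Q p(T) Qᴴ b = p(A) b. -/
open Matrix MeasureTheory

/-- The Euclidean 2-norm of a complex vector. -/
noncomputable def norm2 {n : ℕ} (v : Fin n → ℂ) : ℝ :=
  Real.sqrt (∑ i, ‖v i‖ ^ 2)

/-! Since `T` is tridiagonal, `T ^ j e₁` vanishes at the last index for `j < k - 1`, so the residual
term `βₖ q eₖᵀ` of the Lanczos relation never acts and `A ^ j (Q e₁) = Q (T ^ j e₁)` for `j < k`.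
By linearity `p(A) (Q e₁) = Q p(T) e₁` for `deg p < k`, and `b = ‖b‖ Q e₁` together with
`Qᴴ Q = 1` gives `Q p(T) Qᴴ b = ‖b‖ Q p(T) e₁`. -/

lemma norm2_eq_norm_toLp {n : ℕ} (v : Fin n → ℂ) :
    norm2 v = ‖(WithLp.toLp 2 v : EuclideanSpace ℂ (Fin n))‖ := by
  rw [EuclideanSpace.norm_eq]
  rfl

lemma norm2_ne_zero {n : ℕ} {v : Fin n → ℂ} (hv : v ≠ 0) : norm2 v ≠ 0 := by
  rw [norm2_eq_norm_toLp, norm_ne_zero_iff]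
  exact fun h => hv (congrArg WithLp.ofLp h)

section Hessenberg

variable {R : Type*} [Semiring R] {k : ℕ} {T : Matrix (Fin k) (Fin k) R}

/-- `hT` says that `T` is upper Hessenberg, so each multiplication by `T` moves the support of a
vector down by at most one index. -/
lemma pow_mulVec_single_apply_eq_zero (hT : ∀ i j : Fin k, (j : ℕ) + 1 < i → T i j = 0)
    (l : Fin k) (c : R) {j : ℕ} {i : Fin k} (hi : (l : ℕ) + j < i) :
    (T ^ j *ᵥ Pi.single l c) i = 0 := by
  induction j generalizing i with
  | zero =>
    rw [pow_zero, one_mulVec, Pi.single_apply, if_neg (fun h => by subst h; omega)]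
  | succ j ih =>
    rw [pow_succ', ← mulVec_mulVec, mulVec, dotProduct]
    refine Finset.sum_eq_zero fun i' _ => ?_
    by_cases h : (l : ℕ) + j < i'
    · rw [ih h, mul_zero]
    · rw [hT i i' (by omega), zero_mul]

lemma vecMulVec_single_mulVec_pow_mulVec_single_eq_zero
    (hT : ∀ i j : Fin k, (j : ℕ) + 1 < i → T i j = 0) {n : Type*} (u : n → R)
    (l : Fin k) (c : R) {j : ℕ} {i : Fin k} (hi : (l : ℕ) + j < i) :
    vecMulVec u (Pi.single i 1) *ᵥ (T ^ j *ᵥ Pi.single l c) = 0 := by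
  rw [vecMulVec_mulVec, single_dotProduct, pow_mulVec_single_apply_eq_zero hT l c hi,
    mul_zero, MulOpposite.op_zero, zero_smul]

end Hessenberg

section Krylov

variable {R : Type*} [CommRing R] {m ι : Type*} [Fintype m] [DecidableEq m] [Fintype ι]
  [DecidableEq ι] {A : Matrix m m R} {Q E : Matrix m ι R} {T : Matrix ι ι R} {v : ι → R} {d : ℕ}

lemma pow_mulVec_mulVec_of_mul_eq_add (hAQ : A * Q = Q * T + E)
    (hE : ∀ j, j + 1 < d → E *ᵥ (T ^ j *ᵥ v) = 0) {j : ℕ} (hj : j < d) :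
    A ^ j *ᵥ (Q *ᵥ v) = Q *ᵥ (T ^ j *ᵥ v) := by
  induction j with
  | zero => simp
  | succ j ih =>
    calc A ^ (j + 1) *ᵥ (Q *ᵥ v) = (A * Q) *ᵥ (T ^ j *ᵥ v) := by
          rw [pow_succ', ← mulVec_mulVec, ih (by omega), mulVec_mulVec]
      _ = Q *ᵥ (T ^ (j + 1) *ᵥ v) := by
          rw [hAQ, add_mulVec, hE j hj, add_zero, ← mulVec_mulVec, mulVec_mulVec (M := T),
            ← pow_succ']

lemma aeval_mulVec_mulVec_of_mul_eq_add (hAQ : A * Q = Q * T + E)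
    (hE : ∀ j, j + 1 < d → E *ᵥ (T ^ j *ᵥ v) = 0) {p : Polynomial R} (hp : p.degree < d) :
    Polynomial.aeval A p *ᵥ (Q *ᵥ v) = Q *ᵥ (Polynomial.aeval T p *ᵥ v) := by
  rcases eq_or_ne p 0 with rfl | hp0
  · simp
  have hpd := (Polynomial.natDegree_lt_iff_degree_lt hp0).mpr hp
  rw [Polynomial.aeval_eq_sum_range' hpd, Polynomial.aeval_eq_sum_range' hpd, sum_mulVec,
    sum_mulVec, mulVec_sum]
  refine Finset.sum_congr rfl fun j hj => ?_
  rw [smul_mulVec, smul_mulVec, mulVec_smul,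
    pow_mulVec_mulVec_of_mul_eq_add hAQ hE (Finset.mem_range.mp hj)]

end Krylov

theorem lanczos_fa_polynomial_exact_general
    {n k : ℕ} (hk : 0 < k)
    (A : Matrix (Fin n) (Fin n) ℂ)
    (b : Fin n → ℂ) (hb : b ≠ 0)
    (Q : Matrix (Fin n) (Fin k) ℂ) (hQ : Qᴴ * Q = 1)
    (hQb : Q.mulVec (Pi.single (⟨0, hk⟩ : Fin k) 1) = (norm2 b)⁻¹ • b)
    (T : Matrix (Fin k) (Fin k) ℝ)
    (hTtri : ∀ i j : Fin k, (i : ℕ) + 1 < (j : ℕ) ∨ (j : ℕ) + 1 < (i : ℕ) → T i j = 0)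
    (βk : ℝ)
    (q : Fin n → ℂ)
    (hAQ : A * Q = Q * T.map Complex.ofReal + (βk : ℂ) •
      Matrix.vecMulVec q (Pi.single (⟨k - 1, Nat.sub_lt hk Nat.one_pos⟩ : Fin k) 1))
    (p : Polynomial ℂ) (hp : p.degree < k) :
    (Q * Polynomial.aeval (T.map Complex.ofReal) p * Qᴴ).mulVec b
      = (Polynomial.aeval A p).mulVec b := by
  set e₀ : Fin k → ℂ := Pi.single ⟨0, hk⟩ 1
  have hHess : ∀ i j : Fin k, (j : ℕ) + 1 < i → T.map Complex.ofReal i j = 0 := fun i j h => by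
    simp [hTtri i j (Or.inr h)]
  have hKrylov := aeval_mulVec_mulVec_of_mul_eq_add (v := e₀) hAQ (fun j hj => by
    rw [smul_mulVec, vecMulVec_single_mulVec_pow_mulVec_single_eq_zero hHess q _ _
      (by simp only; omega), smul_zero]) hp
  have hbQ : b = (norm2 b : ℂ) • Q *ᵥ e₀ := by
    rw [hQb, ← Complex.coe_smul, smul_smul, Complex.ofReal_inv,
      mul_inv_cancel₀ (by exact_mod_cast norm2_ne_zero hb), one_smul]
  calc (Q * Polynomial.aeval (T.map Complex.ofReal) p * Qᴴ) *ᵥ b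
      = (norm2 b : ℂ) • Q *ᵥ (Polynomial.aeval (T.map Complex.ofReal) p *ᵥ (Qᴴ * Q) *ᵥ e₀) := by
        conv_lhs => rw [hbQ]
        simp only [mulVec_smul, mulVec_mulVec, Matrix.mul_assoc]
    _ = (Polynomial.aeval A p) *ᵥ b := by
        rw [hQ, one_mulVec, ← hKrylov, ← mulVec_smul, ← hbQ]

theorem lanczos_fa_polynomial_exact
    {n k : ℕ} (hn : 0 < n) (hk : 0 < k)
    (A : Matrix (Fin n) (Fin n) ℂ) (hA : A.IsHermitian)
    (b : Fin n → ℂ) (hb : b ≠ 0)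
    (Q : Matrix (Fin n) (Fin k) ℂ) (hQ : Qᴴ * Q = 1)
    (hQb : Q.mulVec (Pi.single (⟨0, hk⟩ : Fin k) 1) = (norm2 b)⁻¹ • b)
    (T : Matrix (Fin k) (Fin k) ℝ) (hTsymm : T.IsSymm)
    (hTtri : ∀ i j : Fin k, (i : ℕ) + 1 < (j : ℕ) ∨ (j : ℕ) + 1 < (i : ℕ) → T i j = 0)
    (hToff : ∀ i j : Fin k, (i : ℕ) + 1 = (j : ℕ) → 0 < T i j)
    (βk : ℝ) (hβk : 0 < βk)
    (q : Fin n → ℂ) (hq : norm2 q = 1) (hQq : Qᴴ.mulVec q = 0)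
    (hAQ : A * Q = Q * T.map Complex.ofReal + (βk : ℂ) •
      Matrix.vecMulVec q (Pi.single (⟨k - 1, Nat.sub_lt hk Nat.one_pos⟩ : Fin k) 1))
    (p : Polynomial ℂ) (hp : p.degree < k) :
    (Q * Polynomial.aeval (T.map Complex.ofReal) p * Qᴴ).mulVec b
      = (Polynomial.aeval A p).mulVec b :=
  lanczos_fa_polynomial_exact_general hk A b hb Q hQ hQb T hTtri βk q hAQ p hp
end

section
/- For every z ∈ ℂ such that T − zI is invertible, the shifted Lanczos residual satisfies res_k(z) = ( (−1)^k · (∏_{j=1}^{k} β_j) / det(T − zI) ) · ‖b‖₂ · q. -/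
open Matrix MeasureTheory

/-- The Lanczos-FA error for the shifted linear system `(A - z I) x = b`. -/
noncomputable def errK {n k : ℕ} (A : Matrix (Fin n) (Fin n) ℂ) (Q : Matrix (Fin n) (Fin k) ℂ)
    (T : Matrix (Fin k) (Fin k) ℂ) (b : Fin n → ℂ) (z : ℂ) : Fin n → ℂ :=
  (A - z • 1)⁻¹.mulVec b - (Q * (T - z • 1)⁻¹ * Qᴴ).mulVec b

/-- The Lanczos-FA residual for the shifted linear system `(A - z I) x = b`. -/
noncomputable def resK {n k : ℕ} (A : Matrix (Fin n) (Fin n) ℂ) (Q : Matrix (Fin n) (Fin k) ℂ)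
    (T : Matrix (Fin k) (Fin k) ℂ) (b : Fin n → ℂ) (z : ℂ) : Fin n → ℂ :=
  b - ((A - z • 1) * (Q * (T - z • 1)⁻¹ * Qᴴ)).mulVec b

/-!
Since `Qᴴ Q = 1` and `b = ‖b‖ Q e₁`, the Lanczos relation `(A - z) Q = Q (T - z) + β_k q e_kᵀ` gives
`(A - z) Q (T - z)⁻¹ Qᴴ b = b + β_k ‖b‖ ((T - z)⁻¹)_{k1} q`, so the residual is
`-β_k ‖b‖ ((T - z)⁻¹)_{k1} q`. The `(k, 1)` cofactor of a Hessenberg matrix is, up to the sign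
`(-1)^(k-1)`, the product of its subdiagonal entries, which for symmetric `T` are `β_1, …, β_{k-1}`.
-/

theorem norm2_eq_norm {n : ℕ} (v : Fin n → ℂ) : norm2 v = ‖WithLp.toLp 2 v‖ := by
  rw [EuclideanSpace.norm_eq]; rfl

namespace Matrix

theorem adjugate_last_zero_of_upperHessenberg {R : Type*} [CommRing R] {m : ℕ}
    (M : Matrix (Fin (m + 1)) (Fin (m + 1)) R)
    (hM : ∀ i j : Fin (m + 1), (j : ℕ) + 1 < i → M i j = 0) :
    adjugate M (Fin.last m) 0 = (-1) ^ m * ∏ i : Fin m, M i.succ i.castSucc := by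
  set N := M.updateRow 0 (Pi.single (Fin.last m) 1)
  -- Moving row `0` of `N` to the bottom makes it upper triangular, with diagonal the subdiagonal
  -- of `M` followed by `1`.
  have hN : (N.submatrix (finRotate (m + 1)) id).IsUpperTriangular := by
    intro i j hij
    induction i using Fin.lastCases with
    | last => simpa [N] using Pi.single_eq_of_ne (Fin.lt_last_iff_ne_last.mp hij) _
    | cast i =>
      have hji : (j : ℕ) + 1 < i.succ := by simp [Fin.lt_def] at hij; simp; omega
      simp [N, Fin.succ_ne_zero, hM _ _ hji]
  have hdet : (N.submatrix (finRotate (m + 1)) id).det = ∏ i : Fin m, M i.succ i.castSucc := by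
    simp [det_of_isUpperTriangular hN, Fin.prod_univ_castSucc, N, Fin.succ_ne_zero]
  have hsign := det_permute (finRotate (m + 1)) N
  rw [hdet, sign_finRotate, Nat.add_sub_cancel] at hsign
  push_cast at hsign
  rw [adjugate_apply, hsign, ← mul_assoc, ← mul_pow, neg_one_mul, neg_neg, one_pow, one_mul]

end Matrix

theorem resK_mulVec_eq_smul_of_mul_eq {n k : ℕ} {A : Matrix (Fin n) (Fin n) ℂ}
    {Q : Matrix (Fin n) (Fin k) ℂ} {T : Matrix (Fin k) (Fin k) ℂ} {q : Fin n → ℂ}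
    {w : Fin k → ℂ} {z : ℂ} (hQ : Qᴴ * Q = 1) (hAQ : A * Q = Q * T + vecMulVec q w)
    (hz : IsUnit (T - z • 1)) (v : Fin k → ℂ) :
    resK A Q T (Q *ᵥ v) z = -(w ⬝ᵥ (T - z • 1)⁻¹ *ᵥ v) • q := by
  have hshift : (A - z • 1) * Q = Q * (T - z • 1) + vecMulVec q w := by
    rw [Matrix.sub_mul, hAQ, Matrix.mul_sub, Matrix.smul_mul, Matrix.mul_smul, Matrix.one_mul,
      Matrix.mul_one, add_sub_right_comm]
  have hsolve : (A - z • 1) * Q * (T - z • 1)⁻¹ = Q + vecMulVec q w * (T - z • 1)⁻¹ := by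
    rw [hshift, Matrix.add_mul, Matrix.mul_assoc,
      mul_nonsing_inv _ ((isUnit_iff_isUnit_det _).mp hz), Matrix.mul_one]
  calc resK A Q T (Q *ᵥ v) z
      = Q *ᵥ v - ((A - z • 1) * Q * (T - z • 1)⁻¹ * (Qᴴ * Q)) *ᵥ v := by
        simp only [resK, mulVec_mulVec, Matrix.mul_assoc]
    _ = -(w ⬝ᵥ (T - z • 1)⁻¹ *ᵥ v) • q := by
        rw [hQ, Matrix.mul_one, hsolve, add_mulVec, ← mulVec_mulVec, vecMulVec_mulVec,
          op_smul_eq_smul, sub_add_cancel_left, neg_smul]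

theorem lanczos_shifted_residual_formula_general
    {n k : ℕ} (hk : 0 < k)
    (A : Matrix (Fin n) (Fin n) ℂ)
    (b : Fin n → ℂ) (hb : b ≠ 0)
    (Q : Matrix (Fin n) (Fin k) ℂ) (hQ : Qᴴ * Q = 1)
    (hQb : Q.mulVec (Pi.single (⟨0, hk⟩ : Fin k) 1) = (norm2 b)⁻¹ • b)
    (T : Matrix (Fin k) (Fin k) ℝ) (hTsymm : T.IsSymm)
    (hTtri : ∀ i j : Fin k, (i : ℕ) + 1 < (j : ℕ) ∨ (j : ℕ) + 1 < (i : ℕ) → T i j = 0)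
    (βk : ℝ)
    (q : Fin n → ℂ)
    (hAQ : A * Q = Q * T.map Complex.ofReal + (βk : ℂ) •
      Matrix.vecMulVec q (Pi.single (⟨k - 1, Nat.sub_lt hk Nat.one_pos⟩ : Fin k) 1))
    (z : ℂ) (hz : IsUnit (T.map Complex.ofReal - z • 1)) :
    resK A Q (T.map Complex.ofReal) b z =
      ((((-1 : ℂ) ^ k *
            (((∏ j : Fin k, if h : (j : ℕ) + 1 < k then T j ⟨(j : ℕ) + 1, h⟩ else βk) : ℝ) : ℂ)) /
            (T.map Complex.ofReal - z • 1).det) * (norm2 b : ℂ)) • q := by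
  obtain ⟨m, rfl⟩ : ∃ m, k = m + 1 := ⟨k - 1, (Nat.succ_pred_eq_of_pos hk).symm⟩
  set M := T.map Complex.ofReal - z • 1 with hMdef
  have hnorm : norm2 b ≠ 0 := by simpa [norm2_eq_norm] using hb
  replace hQb : Q *ᵥ Pi.single 0 1 = (norm2 b)⁻¹ • b := hQb
  have hbQ : b = Q *ᵥ ((norm2 b : ℂ) • Pi.single 0 1) := by
    rw [mulVec_smul, hQb, ← Complex.coe_smul, smul_smul, ← Complex.ofReal_mul,
      mul_inv_cancel₀ hnorm, Complex.ofReal_one, one_smul]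
  have hAQ' : A * Q = Q * T.map Complex.ofReal +
      vecMulVec q ((βk : ℂ) • Pi.single (Fin.last m) 1) := by
    rwa [vecMulVec_smul]
  have hM : ∀ i j : Fin (m + 1), (j : ℕ) + 1 < i → M i j = 0 := fun i j hji => by
    simp [M, hTtri i j (Or.inr hji), Fin.ne_of_gt (show j < i by omega)]
  have hsub : ∀ i : Fin m, M i.succ i.castSucc = T i.castSucc i.succ := fun i => by
    simp [M, (Fin.castSucc_lt_succ (i := i)).ne', hTsymm.apply]
  have hprod : (∏ j : Fin (m + 1), if h : (j : ℕ) + 1 < m + 1 then T j ⟨(j : ℕ) + 1, h⟩ else βk)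
      = (∏ i : Fin m, T i.castSucc i.succ) * βk := by
    simp [Fin.prod_univ_castSucc, Fin.succ]
  conv_lhs => rw [hbQ]
  rw [resK_mulVec_eq_smul_of_mul_eq hQ hAQ' hz, mulVec_smul, mulVec_single_one, smul_dotProduct,
    dotProduct_smul, single_one_dotProduct, col_apply, inv_def, Matrix.smul_apply,
    adjugate_last_zero_of_upperHessenberg M hM, hprod, Ring.inverse_eq_inv']
  simp only [hsub, ← hMdef]
  congr 1
  push_cast
  ring

theorem lanczos_shifted_residual_formula
    {n k : ℕ} (hn : 0 < n) (hk : 0 < k)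
    (A : Matrix (Fin n) (Fin n) ℂ) (hA : A.IsHermitian)
    (b : Fin n → ℂ) (hb : b ≠ 0)
    (Q : Matrix (Fin n) (Fin k) ℂ) (hQ : Qᴴ * Q = 1)
    (hQb : Q.mulVec (Pi.single (⟨0, hk⟩ : Fin k) 1) = (norm2 b)⁻¹ • b)
    (T : Matrix (Fin k) (Fin k) ℝ) (hTsymm : T.IsSymm)
    (hTtri : ∀ i j : Fin k, (i : ℕ) + 1 < (j : ℕ) ∨ (j : ℕ) + 1 < (i : ℕ) → T i j = 0)
    (hToff : ∀ i j : Fin k, (i : ℕ) + 1 = (j : ℕ) → 0 < T i j)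
    (βk : ℝ) (hβk : 0 < βk)
    (q : Fin n → ℂ) (hq : norm2 q = 1) (hQq : Qᴴ.mulVec q = 0)
    (hAQ : A * Q = Q * T.map Complex.ofReal + (βk : ℂ) •
      Matrix.vecMulVec q (Pi.single (⟨k - 1, Nat.sub_lt hk Nat.one_pos⟩ : Fin k) 1))
    (z : ℂ) (hz : IsUnit (T.map Complex.ofReal - z • 1)) :
    resK A Q (T.map Complex.ofReal) b z =
      ((((-1 : ℂ) ^ k *
            (((∏ j : Fin k, if h : (j : ℕ) + 1 < k then T j ⟨(j : ℕ) + 1, h⟩ else βk) : ℝ) : ℂ)) /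
            (T.map Complex.ofReal - z • 1).det) * (norm2 b : ℂ)) • q :=
  lanczos_shifted_residual_formula_general hk A b hb Q hQ hQb T hTsymm hTtri βk q hAQ z hz
end

section
/- For all z, w ∈ ℂ such that A − zI, A − wI, T − zI, and T − wI are all invertible, one has res_k(z) = ( det(T − wI) / det(T − zI) ) · res_k(w) and err_k(z) = ( det(T − wI) / det(T − zI) ) · (A − wI)(A − zI)⁻¹ · err_k(w). -/
open Matrix MeasureTheory

lemma adj_corner_det {m : ℕ} (T : Matrix (Fin (m+1)) (Fin (m+1)) ℂ)
    (hlow : ∀ i j : Fin (m+1), (j:ℕ)+1 < (i:ℕ) → T i j = 0) (u : ℂ) :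
    (Equiv.Perm.sign (finRotate (m+1)) : ℂ) *
      ((T - u • 1).updateRow 0 (Pi.single (Fin.last m) 1)).det
    = ∏ i : Fin (m+1), (if i = Fin.last m then 1 else T (i+1) i) := by
  set N := (T - u • 1).updateRow 0 (Pi.single (Fin.last m) 1) with hN
  have hdet : (N.submatrix (finRotate (m+1)) id).det
      = (Equiv.Perm.sign (finRotate (m+1)) : ℂ) * N.det := by
    exact_mod_cast Matrix.det_permute (finRotate (m+1)) N
  rw [← hdet]
  have htri : (N.submatrix (finRotate (m+1)) id).BlockTriangular id := by
    intro i j hij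
    simp only [Matrix.submatrix_apply, id_eq, finRotate_succ_apply] at hij ⊢
    by_cases hi : i = Fin.last m
    · subst hi
      rw [Fin.last_add_one, hN, Matrix.updateRow_self]
      have : j ≠ Fin.last m := ne_of_lt hij
      simp [Pi.single_apply, this]
    · have h1 : i + 1 ≠ 0 := by
        intro h
        have := Fin.val_add_one_of_lt (Fin.lt_last_iff_ne_last.mpr hi)
        rw [h] at this
        simp at this
      rw [hN, Matrix.updateRow_ne h1]
      have hvi : ((i+1 : Fin (m+1)) : ℕ) = (i:ℕ) + 1 :=
        Fin.val_add_one_of_lt (Fin.lt_last_iff_ne_last.mpr hi)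
      have hij' : (j:ℕ) + 1 < ((i+1 : Fin (m+1)) : ℕ) := by
        rw [hvi]
        have := Fin.lt_def.mp hij
        omega
      simp only [Matrix.sub_apply, hlow _ _ hij', Matrix.smul_apply, Matrix.one_apply,
        smul_eq_mul]
      have : (i+1 : Fin (m+1)) ≠ j := by
        intro h; rw [← h] at hij; omega
      simp [this]
  rw [Matrix.det_of_upperTriangular htri]
  apply Finset.prod_congr rfl
  intro i _
  simp only [Matrix.submatrix_apply, id_eq, finRotate_succ_apply]
  by_cases hi : i = Fin.last m
  · subst hi
    rw [Fin.last_add_one, hN, Matrix.updateRow_self, if_pos rfl]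
    simp [Pi.single_apply]
  · have h1 : i + 1 ≠ 0 := by
      intro h
      have := Fin.val_add_one_of_lt (Fin.lt_last_iff_ne_last.mpr hi)
      rw [h] at this
      simp at this
    have hvi : ((i+1 : Fin (m+1)) : ℕ) = (i:ℕ) + 1 :=
      Fin.val_add_one_of_lt (Fin.lt_last_iff_ne_last.mpr hi)
    rw [hN, Matrix.updateRow_ne h1, if_neg hi]
    have : (i+1 : Fin (m+1)) ≠ i := by
      intro h
      have := congrArg Fin.val h
      omega
    simp [Matrix.sub_apply, Matrix.one_apply, this]

lemma adj_corner_indep {k : ℕ} (hk : 0 < k) (T : Matrix (Fin k) (Fin k) ℂ)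
    (hlow : ∀ i j : Fin k, (j:ℕ)+1 < (i:ℕ) → T i j = 0) (z w : ℂ) :
    adjugate (T - z • 1) ⟨k - 1, Nat.sub_lt hk Nat.one_pos⟩ ⟨0, hk⟩
      = adjugate (T - w • 1) ⟨k - 1, Nat.sub_lt hk Nat.one_pos⟩ ⟨0, hk⟩ := by
  obtain ⟨m, rfl⟩ : ∃ m, k = m + 1 := ⟨k - 1, (Nat.succ_pred_eq_of_pos hk).symm⟩
  have hlast : (⟨m + 1 - 1, Nat.sub_lt hk Nat.one_pos⟩ : Fin (m+1)) = Fin.last m := rfl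
  have h0 : (⟨0, hk⟩ : Fin (m+1)) = 0 := rfl
  rw [hlast, h0, Matrix.adjugate_apply, Matrix.adjugate_apply]
  have hz := adj_corner_det T hlow z
  have hw := adj_corner_det T hlow w
  have hsign : (Equiv.Perm.sign (finRotate (m+1)) : ℂ) ≠ 0 := by
    rcases Int.units_eq_one_or (Equiv.Perm.sign (finRotate (m+1))) with h | h <;> rw [h] <;> norm_num
  exact mul_left_cancel₀ hsign (hz.trans hw.symm)

theorem lanczos_shifted_error_relation
    {n k : ℕ} (hn : 0 < n) (hk : 0 < k)
    (A : Matrix (Fin n) (Fin n) ℂ) (hA : A.IsHermitian)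
    (b : Fin n → ℂ) (hb : b ≠ 0)
    (Q : Matrix (Fin n) (Fin k) ℂ) (hQ : Qᴴ * Q = 1)
    (hQb : Q.mulVec (Pi.single (⟨0, hk⟩ : Fin k) 1) = (norm2 b)⁻¹ • b)
    (T : Matrix (Fin k) (Fin k) ℝ) (hTsymm : T.IsSymm)
    (hTtri : ∀ i j : Fin k, (i : ℕ) + 1 < (j : ℕ) ∨ (j : ℕ) + 1 < (i : ℕ) → T i j = 0)
    (hToff : ∀ i j : Fin k, (i : ℕ) + 1 = (j : ℕ) → 0 < T i j)
    (βk : ℝ) (hβk : 0 < βk)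
    (q : Fin n → ℂ) (hq : norm2 q = 1) (hQq : Qᴴ.mulVec q = 0)
    (hAQ : A * Q = Q * T.map Complex.ofReal + (βk : ℂ) •
      Matrix.vecMulVec q (Pi.single (⟨k - 1, Nat.sub_lt hk Nat.one_pos⟩ : Fin k) 1))
    (z w : ℂ)
    (hAz : IsUnit (A - z • 1)) (hAw : IsUnit (A - w • 1))
    (hTz : IsUnit (T.map Complex.ofReal - z • 1)) (hTw : IsUnit (T.map Complex.ofReal - w • 1)) :
    resK A Q (T.map Complex.ofReal) b z =
        ((T.map Complex.ofReal - w • 1).det / (T.map Complex.ofReal - z • 1).det) •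
          resK A Q (T.map Complex.ofReal) b w ∧
      errK A Q (T.map Complex.ofReal) b z =
        ((T.map Complex.ofReal - w • 1).det / (T.map Complex.ofReal - z • 1).det) •
          ((A - w • 1) * (A - z • 1)⁻¹).mulVec (errK A Q (T.map Complex.ofReal) b w) := by
  classical
  set T' : Matrix (Fin k) (Fin k) ℂ := T.map Complex.ofReal with hT'
  set e0 : Fin k := ⟨0, hk⟩ with he0
  set km1 : Fin k := ⟨k - 1, Nat.sub_lt hk Nat.one_pos⟩ with hkm1
  set e1 : Fin k → ℂ := Pi.single e0 1 with he1
  set ek : Fin k → ℂ := Pi.single km1 1 with hek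
  -- norm2 b is positive
  have hb0 : 0 < norm2 b := by
    obtain ⟨i, hi⟩ := Function.ne_iff.mp hb
    refine Real.sqrt_pos.mpr (Finset.sum_pos' (fun j _ => by positivity) ⟨i, Finset.mem_univ i, ?_⟩)
    exact pow_pos (norm_pos_iff.mpr hi) 2
  set nb : ℂ := ((norm2 b : ℝ) : ℂ) with hnb
  have hnb0 : nb ≠ 0 := by
    simpa [hnb] using ne_of_gt hb0
  -- real smul to complex smul
  have hQe1 : Q.mulVec e1 = nb⁻¹ • b := by
    rw [he1, he0, hQb]
    funext i
    simp [hnb, Complex.real_smul]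
  have hbQ : b = nb • Q.mulVec e1 := by
    rw [hQe1, smul_smul, mul_inv_cancel₀ hnb0, one_smul]
  have hQhb : Qᴴ.mulVec b = nb • e1 := by
    rw [hbQ, Matrix.mulVec_smul, Matrix.mulVec_mulVec, hQ, Matrix.one_mulVec]
  have hvv : ∀ v : Fin k → ℂ, (Matrix.vecMulVec q ek).mulVec v = (v km1) • q := by
    intro v
    funext i
    simp only [Matrix.mulVec, Matrix.vecMulVec_apply, dotProduct, hek, Pi.single_apply,
      mul_ite, ite_mul, one_mul, mul_one, mul_zero, zero_mul, Pi.smul_apply, smul_eq_mul]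
    rw [Finset.sum_ite_eq' Finset.univ km1 (fun j => q i * v j)]
    simp [mul_comm]
  -- key formula for the residual
  have key : ∀ u : ℂ, IsUnit (T' - u • 1) →
      resK A Q T' b u =
        (-( (βk : ℂ) * nb * adjugate (T' - u • 1) km1 e0 / (T' - u • 1).det)) • q := by
    intro u hTu
    have hSd : IsUnit (T' - u • 1).det := (Matrix.isUnit_iff_isUnit_det _).mp hTu
    set S : Matrix (Fin k) (Fin k) ℂ := T' - u • 1 with hS
    have hfac : (A - u • 1) * Q = Q * S + (βk : ℂ) • Matrix.vecMulVec q ek := by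
      rw [Matrix.sub_mul, hAQ, hS, Matrix.mul_sub, Matrix.mul_smul, Matrix.mul_one,
        Matrix.smul_mul, Matrix.one_mul]
      abel
    have hmat : (A - u • 1) * (Q * S⁻¹ * Qᴴ)
        = Q * Qᴴ + (βk : ℂ) • (Matrix.vecMulVec q ek * (S⁻¹ * Qᴴ)) := by
      calc (A - u • 1) * (Q * S⁻¹ * Qᴴ)
          = ((A - u • 1) * Q) * (S⁻¹ * Qᴴ) := by simp only [Matrix.mul_assoc]
        _ = (Q * S + (βk : ℂ) • Matrix.vecMulVec q ek) * (S⁻¹ * Qᴴ) := by rw [hfac]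
        _ = Q * (S * S⁻¹) * Qᴴ + (βk : ℂ) • (Matrix.vecMulVec q ek * (S⁻¹ * Qᴴ)) := by
            rw [Matrix.add_mul, Matrix.smul_mul]
            simp only [Matrix.mul_assoc]
        _ = Q * Qᴴ + (βk : ℂ) • (Matrix.vecMulVec q ek * (S⁻¹ * Qᴴ)) := by
            rw [Matrix.mul_nonsing_inv _ hSd, Matrix.mul_one]
    have hQQb : (Q * Qᴴ).mulVec b = b := by
      rw [← Matrix.mulVec_mulVec, hQhb, Matrix.mulVec_smul, hQe1, smul_smul,
        mul_inv_cancel₀ hnb0, one_smul]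
    have hsecond : (Matrix.vecMulVec q ek * (S⁻¹ * Qᴴ)).mulVec b
        = (nb * S⁻¹ km1 e0) • q := by
      rw [← Matrix.mulVec_mulVec, ← Matrix.mulVec_mulVec, hQhb, Matrix.mulVec_smul, hvv]
      rw [he1, Matrix.mulVec_single]
      simp [smul_smul]
    have hSinv : S⁻¹ km1 e0 = (S.det)⁻¹ * adjugate S km1 e0 := by
      rw [Matrix.inv_def, Ring.inverse_eq_inv']
      simp
    show b - ((A - u • 1) * (Q * S⁻¹ * Qᴴ)).mulVec b = _
    rw [hmat, Matrix.add_mulVec, hQQb, Matrix.smul_mulVec, hsecond, hSinv, smul_smul]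
    have hsc : -((βk : ℂ) * nb * adjugate S km1 e0 / S.det)
        = -((βk : ℂ) * (nb * (S.det⁻¹ * adjugate S km1 e0))) := by
      rw [div_eq_mul_inv]; ring
    rw [hsc, neg_smul]
    abel
  -- determinants nonzero
  have hdz : (T' - z • 1).det ≠ 0 :=
    ((Matrix.isUnit_iff_isUnit_det _).mp hTz).ne_zero
  have hdw : (T' - w • 1).det ≠ 0 :=
    ((Matrix.isUnit_iff_isUnit_det _).mp hTw).ne_zero
  -- adjugate corner independence
  have hlow : ∀ i j : Fin k, (j : ℕ) + 1 < (i : ℕ) → T' i j = 0 := by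
    intro i j h
    simp [hT', Matrix.map_apply, hTtri i j (Or.inr h)]
  have hadj : adjugate (T' - z • 1) km1 e0 = adjugate (T' - w • 1) km1 e0 :=
    adj_corner_indep hk T' hlow z w
  -- residual relation
  have hres : resK A Q T' b z = ((T' - w • 1).det / (T' - z • 1).det) • resK A Q T' b w := by
    rw [key z hTz, key w hTw, smul_smul, hadj]
    congr 1
    field_simp
  refine ⟨hres, ?_⟩
  -- error relation
  have hAdz : IsUnit (A - z • 1).det := (Matrix.isUnit_iff_isUnit_det _).mp hAz
  have hAdw : IsUnit (A - w • 1).det := (Matrix.isUnit_iff_isUnit_det _).mp hAw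
  have herr : ∀ u : ℂ, IsUnit (A - u • 1).det →
      errK A Q T' b u = (A - u • 1)⁻¹.mulVec (resK A Q T' b u) := by
    intro u hd
    unfold errK resK
    rw [Matrix.mulVec_sub, Matrix.mulVec_mulVec, ← Matrix.mul_assoc,
      Matrix.nonsing_inv_mul _ hd, Matrix.one_mul]
  have hresw : (A - w • 1).mulVec (errK A Q T' b w) = resK A Q T' b w := by
    rw [herr w hAdw, Matrix.mulVec_mulVec, Matrix.mul_nonsing_inv _ hAdw, Matrix.one_mulVec]
  have hcomm : (A - z • 1) * (A - w • 1) = (A - w • 1) * (A - z • 1) := by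
    simp only [Matrix.sub_mul, Matrix.mul_sub, Matrix.smul_mul, Matrix.mul_smul,
      Matrix.one_mul, Matrix.mul_one, smul_sub, smul_smul, mul_comm z w]
    abel
  have hswap : (A - z • 1)⁻¹ * (A - w • 1) = (A - w • 1) * (A - z • 1)⁻¹ := by
    calc (A - z • 1)⁻¹ * (A - w • 1)
        = (A - z • 1)⁻¹ * (A - w • 1) * ((A - z • 1) * (A - z • 1)⁻¹) := by
          rw [Matrix.mul_nonsing_inv _ hAdz, Matrix.mul_one]
      _ = (A - z • 1)⁻¹ * ((A - w • 1) * (A - z • 1)) * (A - z • 1)⁻¹ := by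
          simp only [Matrix.mul_assoc]
      _ = (A - z • 1)⁻¹ * ((A - z • 1) * (A - w • 1)) * (A - z • 1)⁻¹ := by rw [← hcomm]
      _ = ((A - z • 1)⁻¹ * (A - z • 1)) * ((A - w • 1) * (A - z • 1)⁻¹) := by
          simp only [Matrix.mul_assoc]
      _ = (A - w • 1) * (A - z • 1)⁻¹ := by
          rw [Matrix.nonsing_inv_mul _ hAdz, Matrix.one_mul]
  rw [herr z hAdz, hres, Matrix.mulVec_smul, ← hresw, Matrix.mulVec_mulVec, hswap]
end

section
/- Let c ∈ ℝ and R > 0 be such that every eigenvalue of A and every eigenvalue of T lies in the open disk { z : |z − c| < R }, let f : ℂ → ℂ be complex differentiable on an open set containing the closed disk { z : |z − c| ≤ R }, and let w ∈ ℝ be such that w is not an eigenvalue of A or of T. Then f(A) b − Q f(T) Qᴴ b = M · err_k(w), where M is the matrix M = −(1/(2πi)) ∮_{|z−c|=R} f(z) · ( det(T − wI) / det(T − zI) ) · (A − wI)(A − zI)⁻¹ dz, the contour integral being taken counterclockwise over the circle of radius R centered at c. -/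
open Matrix MeasureTheory

/-- Apply a scalar function to a Hermitian matrix through its spectral decomposition. -/
noncomputable def matFun {m : ℕ} {B : Matrix (Fin m) (Fin m) ℂ}
    (hB : B.IsHermitian) (f : ℝ → ℂ) : Matrix (Fin m) (Fin m) ℂ :=
  (hB.eigenvectorUnitary : Matrix (Fin m) (Fin m) ℂ) *
    Matrix.diagonal (fun i => f (hB.eigenvalues i)) *
    star (hB.eigenvectorUnitary : Matrix (Fin m) (Fin m) ℂ)

/-!
By the Cauchy integral formula in the eigenbases of `A` and `T`,
`f(A) b - Q f(T) Qᴴ b = -(2πi)⁻¹ ∮ f(z) err_k(z) dz`. The Lanczos relation turns the residual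
`b - (A - zI) Q (T - zI)⁻¹ Qᴴ b` into `-β_k ‖b‖ [(T - zI)⁻¹]_{k,1} q`, and
`[(T - zI)⁻¹]_{k,1} = adj(T)_{k,1} / det(T - zI)`: the `(k, 1)` cofactor of an upper Hessenberg
matrix is the product of its subdiagonal, which the shift does not touch. So
`det(T - zI)` times the residual does not depend on `z`, whence
`err_k(z) = det(T - wI) / det(T - zI) · (A - wI)(A - zI)⁻¹ err_k(w)` on the circle, and
substituting this into the integral gives the claim.
-/

open Metric Unitary Complex Real

theorem DifferentiableOn.sum_mul_eq_circleIntegral {ι : Type*} [Fintype ι] {f : ℂ → ℂ}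
    {c : ℂ} {R : ℝ} (hf : DifferentiableOn ℂ f (closedBall c R)) {μ : ι → ℂ}
    (hμ : ∀ j, μ j ∈ ball c R) (a : ι → ℂ) :
    ∑ j, a j * f (μ j) = -(2 * π * I)⁻¹ * ∮ z in C(c, R), f z * ∑ j, a j * (μ j - z)⁻¹ := by
  have hcauchy (j : ι) :
      (∮ z in C(c, R), f z * (a j * (μ j - z)⁻¹)) = -(2 * π * I) * (a j * f (μ j)) := by
    have hflip (z : ℂ) : f z * (a j * (μ j - z)⁻¹) = -a j * ((z - μ j)⁻¹ • f z) := by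
      rw [smul_eq_mul, ← neg_sub z, inv_neg]; ring
    simp_rw [hflip, circleIntegral.integral_const_mul, hf.circleIntegral_sub_inv_smul (hμ j),
      smul_eq_mul]
    ring
  have hint (j : ι) : CircleIntegrable (fun z => f z * (a j * (μ j - z)⁻¹)) c R := by
    refine ContinuousOn.circleIntegrable (pos_of_mem_ball (hμ j)).le ?_
    refine (hf.continuousOn.mono sphere_subset_closedBall).mul (continuousOn_const.mul ?_)
    exact (continuousOn_const.sub continuousOn_id).inv₀ fun z hz => sub_ne_zero.mpr
      (sphere_disjoint_ball.ne_of_mem hz (hμ j)).symm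
  simp_rw [Finset.mul_sum, circleIntegral.integral_fun_sum fun j _ => hint j, hcauchy]
  rw [← Finset.mul_sum, ← mul_assoc, neg_mul_neg, inv_mul_cancel₀ two_pi_I_ne_zero, one_mul]

theorem Matrix.of_mul_circleIntegral_mulVec {ι κ : Type*} [Fintype κ] {c : ℂ} {R : ℝ} (a : ℂ)
    {g : ι → κ → ℂ → ℂ} (hg : ∀ i j, CircleIntegrable (g i j) c R) (v : κ → ℂ) :
    (of fun i j => a * ∮ z in C(c, R), g i j z) *ᵥ v =
      fun i => a * ∮ z in C(c, R), ∑ j, g i j z * v j := by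
  ext i
  have hint : ∀ j ∈ Finset.univ, CircleIntegrable (fun z => g i j z * v j) c R :=
    fun j _ => (hg i j).mul_const (v j)
  simp only [mulVec, dotProduct, of_apply]
  rw [circleIntegral.integral_fun_sum hint, Finset.mul_sum]
  refine Finset.sum_congr rfl fun j _ => ?_
  rw [mul_assoc]
  exact congrArg (a * ·) (circleIntegral.integral_smul_const (g i j) (v j) c R).symm

theorem Matrix.continuousOn_inv_sub_smul_one {m : Type*} [Fintype m] [DecidableEq m]
    (B : Matrix m m ℂ) :
    ContinuousOn (fun z : ℂ => (B - z • 1)⁻¹) {z | IsUnit (B - z • 1).det} := by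
  rintro z ⟨u, hu⟩
  refine ((continuousAt_matrix_inv _ ?_).comp (by fun_prop)).continuousWithinAt
  exact hu ▸ NormedRing.inverse_continuousAt u

theorem Matrix.sub_smul_one_mul_inv_comm {m : Type*} [Fintype m] [DecidableEq m]
    {A : Matrix m m ℂ} {z : ℂ} (hz : IsUnit (A - z • 1).det) (w : ℂ) :
    (A - w • 1) * (A - z • 1)⁻¹ = (A - z • 1)⁻¹ * (A - w • 1) := by
  have hshift : A - w • 1 = (A - z • 1) + (z - w) • 1 := by
    rw [sub_smul]; abel
  rw [hshift, add_mul, mul_add, mul_nonsing_inv _ hz, nonsing_inv_mul _ hz, smul_one_mul,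
    mul_smul_one]

def Matrix.IsUpperHessenberg {R : Type*} [Zero R] {k : ℕ} (M : Matrix (Fin k) (Fin k) R) :
    Prop :=
  ∀ i j : Fin k, (j : ℕ) + 1 < i → M i j = 0

theorem Matrix.IsUpperHessenberg.adjugate_last_zero {R : Type*} [CommRing R] {k : ℕ}
    {M : Matrix (Fin (k + 1)) (Fin (k + 1)) R} (hM : M.IsUpperHessenberg) :
    M.adjugate (Fin.last k) 0 = (-1) ^ k * ∏ i : Fin k, M i.succ i.castSucc := by
  rw [adjugate_apply, det_succ_row_zero, Finset.sum_eq_single (Fin.last k)]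
  · have hminor : ((M.updateRow 0 (Pi.single (Fin.last k) 1)).submatrix Fin.succ
        Fin.castSucc).det = ∏ i : Fin k, M i.succ i.castSucc := by
      rw [det_of_isUpperTriangular]
      · simp
      · intro i j hij
        have hji : (j : ℕ) < i := hij
        simp only [submatrix_apply, updateRow_ne (Fin.succ_ne_zero i)]
        exact hM _ _ (by simp only [Fin.val_castSucc, Fin.val_succ]; omega)
    simp [hminor]
  · intro j _ hj
    simp [Pi.single_eq_of_ne hj]
  · simp

theorem Matrix.IsUpperHessenberg.adjugate_sub_smul_one_last_zero {R : Type*} [CommRing R]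
    {k : ℕ} {M : Matrix (Fin (k + 1)) (Fin (k + 1)) R} (hM : M.IsUpperHessenberg) (z : R) :
    (M - z • 1).adjugate (Fin.last k) 0 = M.adjugate (Fin.last k) 0 := by
  have hMz : (M - z • 1).IsUpperHessenberg := by
    intro i j hij
    simp [hM i j hij, one_apply_ne (show i ≠ j by omega)]
  rw [hMz.adjugate_last_zero, hM.adjugate_last_zero]
  simp [one_apply_ne (Fin.castSucc_lt_succ (i := _)).ne']

namespace Matrix.IsHermitian

variable {m : Type*} [Fintype m] [DecidableEq m] {B : Matrix m m ℂ} (hB : B.IsHermitian)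

theorem sub_smul_one_eq (z : ℂ) :
    B - z • 1 = conjStarAlgAut ℂ _ hB.eigenvectorUnitary
      (diagonal fun i => (hB.eigenvalues i : ℂ) - z) := by
  conv_lhs => rw [hB.spectral_theorem]
  rw [← map_one (conjStarAlgAut ℂ _ hB.eigenvectorUnitary), ← map_smul, ← map_sub]
  congr 1
  ext i j
  by_cases h : i = j <;> simp [h]

theorem sub_smul_one_mul_conj_inv {z : ℂ} (hz : ∀ i, (hB.eigenvalues i : ℂ) ≠ z) :
    (B - z • 1) * conjStarAlgAut ℂ _ hB.eigenvectorUnitary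
      (diagonal fun i => ((hB.eigenvalues i : ℂ) - z)⁻¹) = 1 := by
  rw [hB.sub_smul_one_eq, ← map_mul, diagonal_mul_diagonal,
    ← map_one (conjStarAlgAut ℂ _ hB.eigenvectorUnitary), ← diagonal_one]
  congr 2
  ext i
  exact mul_inv_cancel₀ (sub_ne_zero.mpr (hz i))

theorem inv_sub_smul_one_eq {z : ℂ} (hz : ∀ i, (hB.eigenvalues i : ℂ) ≠ z) :
    (B - z • 1)⁻¹ = conjStarAlgAut ℂ _ hB.eigenvectorUnitary
      (diagonal fun i => ((hB.eigenvalues i : ℂ) - z)⁻¹) :=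
  inv_eq_right_inv (hB.sub_smul_one_mul_conj_inv hz)

theorem isUnit_det_sub_smul_one {z : ℂ} (hz : ∀ i, (hB.eigenvalues i : ℂ) ≠ z) :
    IsUnit (B - z • 1).det :=
  isUnit_det_of_right_inverse (hB.sub_smul_one_mul_conj_inv hz)

variable {c : ℂ} {R : ℝ}

theorem eigenvalues_ne_of_mem_sphere (hspec : ∀ i, (hB.eigenvalues i : ℂ) ∈ ball c R) {z : ℂ}
    (hz : z ∈ sphere c R) (i : m) : (hB.eigenvalues i : ℂ) ≠ z :=
  (sphere_disjoint_ball.ne_of_mem hz (hspec i)).symm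

theorem continuousOn_inv_sub_smul_one_sphere
    (hspec : ∀ i, (hB.eigenvalues i : ℂ) ∈ ball c R) :
    ContinuousOn (fun z : ℂ => (B - z • 1)⁻¹) (sphere c R) :=
  (continuousOn_inv_sub_smul_one B).mono fun _ hz =>
    hB.isUnit_det_sub_smul_one (hB.eigenvalues_ne_of_mem_sphere hspec hz)

end Matrix.IsHermitian

theorem Matrix.IsHermitian.matFun_mulVec_apply_eq_circleIntegral {m : ℕ}
    {B : Matrix (Fin m) (Fin m) ℂ} (hB : B.IsHermitian) {f : ℂ → ℂ} {c : ℂ} {R : ℝ}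
    (hR : 0 ≤ R) (hf : DifferentiableOn ℂ f (closedBall c R))
    (hspec : ∀ i, (hB.eigenvalues i : ℂ) ∈ ball c R) {ι κ : Type*} [Fintype κ]
    (X : Matrix ι (Fin m) ℂ) (Y : Matrix (Fin m) κ ℂ) (v : κ → ℂ) (i : ι) :
    ((X * matFun hB (fun x => f x) * Y) *ᵥ v) i =
      -(2 * π * I)⁻¹ * ∮ z in C(c, R), f z * ((X * (B - z • 1)⁻¹ * Y) *ᵥ v) i := by
  set U : Matrix (Fin m) (Fin m) ℂ := (hB.eigenvectorUnitary : Matrix (Fin m) (Fin m) ℂ)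
  have hconj (d : Fin m → ℂ) :
      ((X * conjStarAlgAut ℂ _ hB.eigenvectorUnitary (diagonal d) * Y) *ᵥ v) i =
        ∑ j, (X * U) i j * ((star U * Y) *ᵥ v) j * d j := by
    rw [conjStarAlgAut_apply, show X * (U * diagonal d * star U) * Y =
      X * U * diagonal d * (star U * Y) by simp only [Matrix.mul_assoc], ← mulVec_mulVec,
      ← mulVec_mulVec]
    simp only [mulVec, dotProduct, diagonal_apply, ite_mul, zero_mul, Finset.sum_ite_eq,
      Finset.mem_univ, if_true]
    exact Finset.sum_congr rfl fun j _ => by ring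
  rw [show matFun hB (fun x => f x) = conjStarAlgAut ℂ _ hB.eigenvectorUnitary
    (diagonal fun j => f (hB.eigenvalues j)) from rfl, hconj, hf.sum_mul_eq_circleIntegral hspec]
  congr 1
  refine circleIntegral.integral_congr hR fun z hz => ?_
  simp only [hB.inv_sub_smul_one_eq (hB.eigenvalues_ne_of_mem_sphere hspec hz), hconj]

theorem matFun_mulVec_sub_apply_eq_circleIntegral_errK {n k : ℕ}
    {A : Matrix (Fin n) (Fin n) ℂ} (hA : A.IsHermitian) {T : Matrix (Fin k) (Fin k) ℂ}
    (hT : T.IsHermitian) (Q : Matrix (Fin n) (Fin k) ℂ) (b : Fin n → ℂ) {f : ℂ → ℂ} {c : ℂ}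
    {R : ℝ} (hR : 0 ≤ R) (hf : DifferentiableOn ℂ f (closedBall c R))
    (hspecA : ∀ i, (hA.eigenvalues i : ℂ) ∈ ball c R)
    (hspecT : ∀ i, (hT.eigenvalues i : ℂ) ∈ ball c R) (i : Fin n) :
    ((matFun hA (fun x => f x)) *ᵥ b - (Q * matFun hT (fun x => f x) * Qᴴ) *ᵥ b) i =
      -(2 * π * I)⁻¹ * ∮ z in C(c, R), f z * errK A Q T b z i := by
  have hfA := hA.matFun_mulVec_apply_eq_circleIntegral hR hf hspecA 1 1 b i
  simp only [Matrix.one_mul, Matrix.mul_one] at hfA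
  have hfc := hf.continuousOn.mono sphere_subset_closedBall
  have hAc := hA.continuousOn_inv_sub_smul_one_sphere hspecA
  have hTc := hT.continuousOn_inv_sub_smul_one_sphere hspecT
  rw [Pi.sub_apply, hfA, hT.matFun_mulVec_apply_eq_circleIntegral hR hf hspecT Q Qᴴ b i,
    ← mul_sub, ← circleIntegral.integral_sub (ContinuousOn.circleIntegrable hR (by fun_prop))
      (ContinuousOn.circleIntegrable hR (by fun_prop))]
  simp only [errK, Pi.sub_apply, mul_sub]

section Lanczos

variable {n k : ℕ} {A : Matrix (Fin n) (Fin n) ℂ} {b q : Fin n → ℂ} {z : ℂ}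

theorem mulVec_errK {Q : Matrix (Fin n) (Fin k) ℂ} {T : Matrix (Fin k) (Fin k) ℂ}
    (hAz : IsUnit (A - z • 1).det) : (A - z • 1) *ᵥ errK A Q T b z = resK A Q T b z := by
  rw [errK, resK, mulVec_sub, mulVec_mulVec, mul_nonsing_inv _ hAz, one_mulVec, mulVec_mulVec]

theorem errK_eq_inv_mulVec_resK {Q : Matrix (Fin n) (Fin k) ℂ} {T : Matrix (Fin k) (Fin k) ℂ}
    (hAz : IsUnit (A - z • 1).det) : errK A Q T b z = (A - z • 1)⁻¹ *ᵥ resK A Q T b z := by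
  rw [← mulVec_errK hAz, mulVec_mulVec, nonsing_inv_mul _ hAz, one_mulVec]

theorem resK_eq_smul {Q : Matrix (Fin n) (Fin k) ℂ} {T : Matrix (Fin k) (Fin k) ℂ}
    (hQ : Qᴴ * Q = 1) {s β : ℂ} {i₀ i₁ : Fin k} (hb : b = s • Q *ᵥ Pi.single i₀ 1)
    (hAQ : A * Q = Q * T + β • vecMulVec q (Pi.single i₁ 1)) (hTz : IsUnit (T - z • 1).det) :
    resK A Q T b z = -(β * s * (T - z • 1)⁻¹ i₁ i₀) • q := by
  have hQb : Qᴴ *ᵥ b = s • Pi.single i₀ 1 := by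
    rw [hb, mulVec_smul, mulVec_mulVec, hQ, one_mulVec]
  have hshift : (A - z • 1) * Q = Q * (T - z • 1) + β • vecMulVec q (Pi.single i₁ 1) := by
    rw [Matrix.sub_mul, hAQ, Matrix.mul_sub, Matrix.smul_mul, Matrix.one_mul, Matrix.mul_smul,
      Matrix.mul_one]
    abel
  calc resK A Q T b z = b - ((A - z • 1) * Q * (T - z • 1)⁻¹) *ᵥ (Qᴴ *ᵥ b) := by
        rw [resK, mulVec_mulVec, Matrix.mul_assoc, Matrix.mul_assoc, Matrix.mul_assoc]
    _ = b - (Q + β • vecMulVec q (Pi.single i₁ 1) * (T - z • 1)⁻¹) *ᵥ (s • Pi.single i₀ 1) := by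
        rw [hshift, hQb, Matrix.add_mul, Matrix.mul_assoc, mul_nonsing_inv _ hTz, Matrix.mul_one,
          Matrix.smul_mul]
    _ = -(β * s * (T - z • 1)⁻¹ i₁ i₀) • q := by
        rw [add_mulVec, mulVec_smul, ← hb, sub_add_cancel_left, neg_smul]
        ext j
        simp only [Matrix.smul_mul, vecMulVec_mul, single_vecMul, one_smul, Pi.neg_apply, mulVec,
          dotProduct, Matrix.smul_apply, vecMulVec_apply, row_apply, smul_eq_mul, Pi.smul_apply,
          Pi.single_apply, mul_ite, mul_one, mul_zero, Finset.sum_ite_eq', Finset.mem_univ,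
          if_true, neg_inj]
        ring

theorem det_smul_resK_eq {Q : Matrix (Fin n) (Fin (k + 1)) ℂ}
    {T : Matrix (Fin (k + 1)) (Fin (k + 1)) ℂ} (hQ : Qᴴ * Q = 1) {s β : ℂ}
    (hb : b = s • Q *ᵥ Pi.single 0 1)
    (hAQ : A * Q = Q * T + β • vecMulVec q (Pi.single (Fin.last k) 1))
    (hT : T.IsUpperHessenberg) (hTz : IsUnit (T - z • 1).det) :
    (T - z • 1).det • resK A Q T b z = -(β * s * T.adjugate (Fin.last k) 0) • q := by
  rw [resK_eq_smul hQ hb hAQ hTz, smul_smul, Matrix.inv_def, Matrix.smul_apply,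
    hT.adjugate_sub_smul_one_last_zero, Ring.inverse_eq_inv', smul_eq_mul]
  congr 1
  field_simp [hTz.ne_zero]

theorem errK_eq_smul_mulVec_errK {Q : Matrix (Fin n) (Fin k) ℂ} {T : Matrix (Fin k) (Fin k) ℂ}
    {w : ℂ} (hAz : IsUnit (A - z • 1).det) (hAw : IsUnit (A - w • 1).det)
    (hTz : (T - z • 1).det ≠ 0)
    (hres : (T - z • 1).det • resK A Q T b z = (T - w • 1).det • resK A Q T b w) :
    errK A Q T b z = ((T - w • 1).det / (T - z • 1).det) •
      (((A - w • 1) * (A - z • 1)⁻¹) *ᵥ errK A Q T b w) := by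
  have hresz : resK A Q T b z = ((T - w • 1).det / (T - z • 1).det) • resK A Q T b w := by
    rw [div_eq_inv_mul, mul_smul, ← hres, inv_smul_smul₀ hTz]
  rw [errK_eq_inv_mulVec_resK hAz, hresz, ← mulVec_errK hAw, mulVec_smul, mulVec_mulVec,
    sub_smul_one_mul_inv_comm hAz]

end Lanczos

theorem matFun_mulVec_sub_eq_of_det_smul_resK_eq {n k : ℕ} {A : Matrix (Fin n) (Fin n) ℂ}
    (hA : A.IsHermitian) {T : Matrix (Fin k) (Fin k) ℂ} (hT : T.IsHermitian)
    (Q : Matrix (Fin n) (Fin k) ℂ) (b : Fin n → ℂ) {f : ℂ → ℂ} {c : ℂ} {R : ℝ} (hR : 0 ≤ R)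
    (hf : DifferentiableOn ℂ f (closedBall c R))
    (hspecA : ∀ i, (hA.eigenvalues i : ℂ) ∈ ball c R)
    (hspecT : ∀ i, (hT.eigenvalues i : ℂ) ∈ ball c R) {w : ℂ} (hAw : IsUnit (A - w • 1).det)
    (hres : ∀ z ∈ sphere c R,
      (T - z • 1).det • resK A Q T b z = (T - w • 1).det • resK A Q T b w) :
    (matFun hA fun x => f x) *ᵥ b - (Q * matFun hT (fun x => f x) * Qᴴ) *ᵥ b =
      (of fun i j => -(2 * π * I)⁻¹ * ∮ z in C(c, R),
        f z * ((T - w • 1).det / (T - z • 1).det) * ((A - w • 1) * (A - z • 1)⁻¹) i j) *ᵥ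
        errK A Q T b w := by
  have hTz (z : ℂ) (hz : z ∈ sphere c R) : (T - z • 1).det ≠ 0 :=
    (hT.isUnit_det_sub_smul_one (hT.eigenvalues_ne_of_mem_sphere hspecT hz)).ne_zero
  have hfc := hf.continuousOn.mono sphere_subset_closedBall
  have hAc := hA.continuousOn_inv_sub_smul_one_sphere hspecA
  have hint (i j : Fin n) : CircleIntegrable (fun z => f z * ((T - w • 1).det / (T - z • 1).det) *
      ((A - w • 1) * (A - z • 1)⁻¹) i j) c R := by
    refine ContinuousOn.circleIntegrable hR ((hfc.mul ?_).mul (by fun_prop))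
    exact continuousOn_const.div (by fun_prop) hTz
  funext i
  rw [matFun_mulVec_sub_apply_eq_circleIntegral_errK hA hT Q b hR hf hspecA hspecT,
    of_mul_circleIntegral_mulVec _ hint]
  congr 1
  refine circleIntegral.integral_congr hR fun z hz => ?_
  have hAz := hA.isUnit_det_sub_smul_one (hA.eigenvalues_ne_of_mem_sphere hspecA hz)
  simp only [errK_eq_smul_mulVec_errK hAz hAw (hTz z hz) (hres z hz), Pi.smul_apply, mulVec,
    dotProduct, smul_eq_mul, Finset.mul_sum]
  exact Finset.sum_congr rfl fun j _ => by ring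

theorem eq_smul_mulVec_of_mulVec_eq_inv_smul {m n : Type*} [Fintype m] [DecidableEq m]
    [Fintype n] {P : Matrix m n ℂ} {Q : Matrix n m ℂ} (hPQ : P * Q = 1) {v : m → ℂ}
    (hv : v ≠ 0) {r : ℝ} {b : n → ℂ} (h : Q *ᵥ v = r⁻¹ • b) : b = (r : ℂ) • Q *ᵥ v := by
  have hr : r ≠ 0 := by
    rintro rfl
    rw [_root_.inv_zero, zero_smul] at h
    exact hv (by rw [← one_mulVec v, ← hPQ, ← mulVec_mulVec, h, mulVec_zero])
  rw [h, Complex.coe_smul, smul_inv_smul₀ hr]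

theorem lanczos_fa_error_integral_representation_general
    {n k : ℕ} (hk : 0 < k)
    (A : Matrix (Fin n) (Fin n) ℂ) (hA : A.IsHermitian)
    (b : Fin n → ℂ)
    (Q : Matrix (Fin n) (Fin k) ℂ) (hQ : Qᴴ * Q = 1)
    (hQb : Q.mulVec (Pi.single (⟨0, hk⟩ : Fin k) 1) = (norm2 b)⁻¹ • b)
    (T : Matrix (Fin k) (Fin k) ℝ)
    (hTtri : ∀ i j : Fin k, (i : ℕ) + 1 < (j : ℕ) ∨ (j : ℕ) + 1 < (i : ℕ) → T i j = 0)
    (βk : ℝ)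
    (q : Fin n → ℂ)
    (hAQ : A * Q = Q * T.map Complex.ofReal + (βk : ℂ) •
      Matrix.vecMulVec q (Pi.single (⟨k - 1, Nat.sub_lt hk Nat.one_pos⟩ : Fin k) 1))
    (hTH : (T.map Complex.ofReal).IsHermitian)
    (c R : ℝ) (hR : 0 < R)
    (hspecA : ∀ i, |hA.eigenvalues i - c| < R)
    (hspecT : ∀ i, |hTH.eigenvalues i - c| < R)
    (f : ℂ → ℂ)
    (hf : ∃ U : Set ℂ, IsOpen U ∧ Metric.closedBall (c : ℂ) R ⊆ U ∧ DifferentiableOn ℂ f U)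
    (w : ℝ) (hwA : ∀ i, hA.eigenvalues i ≠ w) (hwT : ∀ i, hTH.eigenvalues i ≠ w) :
    (matFun hA fun x : ℝ => f (x : ℂ)).mulVec b -
        (Q * matFun hTH (fun x : ℝ => f (x : ℂ)) * Qᴴ).mulVec b =
      (Matrix.of fun i j : Fin n =>
          (-(2 * Real.pi * Complex.I)⁻¹) *
            ∮ z in C((c : ℂ), R),
              f z * ((T.map Complex.ofReal - (w : ℂ) • 1).det /
                  (T.map Complex.ofReal - z • 1).det) *
                (((A - (w : ℂ) • 1) * (A - z • 1)⁻¹) i j)).mulVec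
        (errK A Q (T.map Complex.ofReal) b (w : ℂ)) := by
  obtain ⟨k, rfl⟩ : ∃ k', k = k' + 1 := ⟨k - 1, by omega⟩
  obtain ⟨U, -, hUR, hfU⟩ := hf
  have hb : b = (norm2 b : ℂ) • Q *ᵥ Pi.single 0 1 :=
    eq_smul_mulVec_of_mulVec_eq_inv_smul hQ (by simp) hQb
  have hHess : (T.map ofReal).IsUpperHessenberg := fun i j h => by simp [hTtri i j (Or.inr h)]
  have hballA : ∀ i, (hA.eigenvalues i : ℂ) ∈ ball (c : ℂ) R := fun i => by
    simpa [Complex.dist_eq, ← Complex.ofReal_sub] using hspecA i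
  have hballT : ∀ i, (hTH.eigenvalues i : ℂ) ∈ ball (c : ℂ) R := fun i => by
    simpa [Complex.dist_eq, ← Complex.ofReal_sub] using hspecT i
  have hTw := hTH.isUnit_det_sub_smul_one (z := w) fun i => by exact_mod_cast hwT i
  have hres (z : ℂ) (hz : IsUnit (T.map ofReal - z • 1).det) :=
    det_smul_resK_eq hQ hb hAQ hHess hz
  refine matFun_mulVec_sub_eq_of_det_smul_resK_eq hA hTH Q b hR.le (hfU.mono hUR) hballA hballT
    (hA.isUnit_det_sub_smul_one fun i => by exact_mod_cast hwA i) fun z hz => ?_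
  exact (hres z (hTH.isUnit_det_sub_smul_one (hTH.eigenvalues_ne_of_mem_sphere hballT hz))).trans
    (hres _ hTw).symm

theorem lanczos_fa_error_integral_representation
    {n k : ℕ} (hn : 0 < n) (hk : 0 < k)
    (A : Matrix (Fin n) (Fin n) ℂ) (hA : A.IsHermitian)
    (b : Fin n → ℂ) (hb : b ≠ 0)
    (Q : Matrix (Fin n) (Fin k) ℂ) (hQ : Qᴴ * Q = 1)
    (hQb : Q.mulVec (Pi.single (⟨0, hk⟩ : Fin k) 1) = (norm2 b)⁻¹ • b)
    (T : Matrix (Fin k) (Fin k) ℝ) (hTsymm : T.IsSymm)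
    (hTtri : ∀ i j : Fin k, (i : ℕ) + 1 < (j : ℕ) ∨ (j : ℕ) + 1 < (i : ℕ) → T i j = 0)
    (hToff : ∀ i j : Fin k, (i : ℕ) + 1 = (j : ℕ) → 0 < T i j)
    (βk : ℝ) (hβk : 0 < βk)
    (q : Fin n → ℂ) (hq : norm2 q = 1) (hQq : Qᴴ.mulVec q = 0)
    (hAQ : A * Q = Q * T.map Complex.ofReal + (βk : ℂ) •
      Matrix.vecMulVec q (Pi.single (⟨k - 1, Nat.sub_lt hk Nat.one_pos⟩ : Fin k) 1))
    (hTH : (T.map Complex.ofReal).IsHermitian)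
    (c R : ℝ) (hR : 0 < R)
    (hspecA : ∀ i, |hA.eigenvalues i - c| < R)
    (hspecT : ∀ i, |hTH.eigenvalues i - c| < R)
    (f : ℂ → ℂ)
    (hf : ∃ U : Set ℂ, IsOpen U ∧ Metric.closedBall (c : ℂ) R ⊆ U ∧ DifferentiableOn ℂ f U)
    (w : ℝ) (hwA : ∀ i, hA.eigenvalues i ≠ w) (hwT : ∀ i, hTH.eigenvalues i ≠ w) :
    (matFun hA fun x : ℝ => f (x : ℂ)).mulVec b -
        (Q * matFun hTH (fun x : ℝ => f (x : ℂ)) * Qᴴ).mulVec b =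
      (Matrix.of fun i j : Fin n =>
          (-(2 * Real.pi * Complex.I)⁻¹) *
            ∮ z in C((c : ℂ), R),
              f z * ((T.map Complex.ofReal - (w : ℂ) • 1).det /
                  (T.map Complex.ofReal - z • 1).det) *
                (((A - (w : ℂ) • 1) * (A - z • 1)⁻¹) i j)).mulVec
        (errK A Q (T.map Complex.ofReal) b (w : ℂ)) :=
  lanczos_fa_error_integral_representation_general hk A hA b Q hQ hQb T hTtri βk q hAQ hTH c R hR
    hspecA hspecT f hf w hwA hwT
end

section
/- Let a ≤ b be real numbers, let w ∈ ℝ, and let z ∈ ℂ \ [a,b] with Im(z) ≠ 0 and Re(z) ≠ w. Set x* := (Re(z)² + Im(z)² − Re(z)·w)/(Re(z) − w). Then sup_{x ∈ [a,b]} |(x − w)/(x − z)| = max{ |a − w|/|a − z| , |b − w|/|b − z| , E }, where E = |z − w|/|Im(z)| if x* ∈ [a,b] and E = 0 otherwise. -/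
/-!
For real `x`, the number `(z - w) * conj (x - z)` has modulus `‖z - w‖ * ‖x - z‖`, imaginary part
`Im z * (x - w)` and real part `(Re z - w) * (x - Re z) - Im z ^ 2`. Hence
`|h_{w,z}(x)| ≤ ‖z - w‖ / |Im z|`, with equality exactly where the real part vanishes, i.e. at `x*`.

Clearing denominators, `|h(c)|² - |h(x)|²` has the sign of
`(Re z - w) * (c - x) * ((c - w) * (x* - x) + (x - w) * (x* - c))`. When `x* ∉ [a, b]` this
forbids a point of `[a, b]` from beating both endpoints, so the supremum is attained at `a` or `b`.
-/

open Complex Set ComplexConjugate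

noncomputable def hwz (w : ℝ) (z : ℂ) (x : ℝ) : ℂ := ((x : ℂ) - w) / ((x : ℂ) - z)

noncomputable def xStar (w : ℝ) (z : ℂ) : ℝ := (z.re ^ 2 + z.im ^ 2 - z.re * w) / (z.re - w)

theorem ofReal_sub_ne_zero_of_im_ne_zero {z : ℂ} (hz : z.im ≠ 0) (x : ℝ) : (x : ℂ) - z ≠ 0 :=
  fun h => hz (by simpa using congrArg Complex.im h)

theorem sq_norm_ofReal_sub (x : ℝ) (z : ℂ) : ‖(x : ℂ) - z‖ ^ 2 = (x - z.re) ^ 2 + z.im ^ 2 := by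
  rw [Complex.sq_norm, Complex.normSq_apply]
  simp only [sub_re, ofReal_re, sub_im, ofReal_im]
  ring

theorem norm_hwz (w : ℝ) (z : ℂ) (x : ℝ) : ‖hwz w z x‖ = |x - w| / ‖(x : ℂ) - z‖ := by
  rw [hwz, norm_div, ← ofReal_sub, norm_real, Real.norm_eq_abs]

theorem sq_norm_hwz (w : ℝ) (z : ℂ) (x : ℝ) :
    ‖hwz w z x‖ ^ 2 = (x - w) ^ 2 / ((x - z.re) ^ 2 + z.im ^ 2) := by
  rw [norm_hwz, div_pow, sq_abs, sq_norm_ofReal_sub]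

theorem abs_im_mul_conj_ofReal_sub (w : ℝ) (z : ℂ) (x : ℝ) :
    |((z - w) * conj ((x : ℂ) - z)).im| = |x - w| * |z.im| := by
  rw [← abs_mul]
  congr 1
  simp only [mul_im, sub_re, sub_im, conj_re, conj_im, ofReal_re, ofReal_im]
  ring

theorem re_mul_conj_ofReal_sub (w : ℝ) (z : ℂ) (x : ℝ) :
    ((z - w) * conj ((x : ℂ) - z)).re = (z.re - w) * (x - z.re) - z.im ^ 2 := by
  simp only [mul_re, sub_re, sub_im, conj_re, conj_im, ofReal_re, ofReal_im]
  ring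

theorem norm_hwz_mul_abs_im_mul_norm (w : ℝ) {z : ℂ} (hz : z.im ≠ 0) (x : ℝ) :
    ‖hwz w z x‖ * |z.im| * ‖(x : ℂ) - z‖ = |((z - w) * conj ((x : ℂ) - z)).im| := by
  rw [norm_hwz, div_mul_eq_mul_div,
    div_mul_cancel₀ _ (norm_ne_zero_iff.2 (ofReal_sub_ne_zero_of_im_ne_zero hz x)),
    abs_im_mul_conj_ofReal_sub]

theorem norm_hwz_le (w : ℝ) {z : ℂ} (hz : z.im ≠ 0) (x : ℝ) :
    ‖hwz w z x‖ ≤ ‖z - w‖ / |z.im| := by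
  have hxz := norm_pos_iff.2 (ofReal_sub_ne_zero_of_im_ne_zero hz x)
  rw [le_div_iff₀ (abs_pos.2 hz), ← mul_le_mul_iff_left₀ hxz, norm_hwz_mul_abs_im_mul_norm w hz]
  calc |((z - w) * conj ((x : ℂ) - z)).im| ≤ ‖(z - w) * conj ((x : ℂ) - z)‖ := abs_im_le_norm _
    _ = ‖z - w‖ * ‖(x : ℂ) - z‖ := by rw [norm_mul, norm_conj]

theorem xStar_sub_re_mul {w : ℝ} {z : ℂ} (hre : z.re ≠ w) :
    (xStar w z - z.re) * (z.re - w) = z.im ^ 2 := by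
  rw [xStar, sub_mul, div_mul_cancel₀ _ (sub_ne_zero.2 hre)]
  ring

theorem norm_hwz_xStar {w : ℝ} {z : ℂ} (hz : z.im ≠ 0) (hre : z.re ≠ w) :
    ‖hwz w z (xStar w z)‖ = ‖z - w‖ / |z.im| := by
  have hxz := norm_pos_iff.2 (ofReal_sub_ne_zero_of_im_ne_zero hz (xStar w z))
  rw [eq_div_iff (abs_pos.2 hz).ne', ← mul_left_inj' hxz.ne', norm_hwz_mul_abs_im_mul_norm w hz,
    abs_im_eq_norm.2, norm_mul, norm_conj]
  rw [re_mul_conj_ofReal_sub]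
  linear_combination xStar_sub_re_mul hre

theorem norm_hwz_le_norm_hwz {w : ℝ} {z : ℂ} (hz : z.im ≠ 0) {x c : ℝ}
    (h : (x - w) ^ 2 * ((c - z.re) ^ 2 + z.im ^ 2) ≤ (c - w) ^ 2 * ((x - z.re) ^ 2 + z.im ^ 2)) :
    ‖hwz w z x‖ ≤ ‖hwz w z c‖ := by
  have hpos : ∀ y : ℝ, 0 < (y - z.re) ^ 2 + z.im ^ 2 := fun y => by positivity
  rw [← sq_le_sq₀ (norm_nonneg _) (norm_nonneg _), sq_norm_hwz, sq_norm_hwz,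
    div_le_div_iff₀ (hpos x) (hpos c)]
  exact h

theorem sq_mul_sub_sq_mul_eq {r i w s : ℝ} (hs : (s - r) * (r - w) = i ^ 2) (x c : ℝ) :
    (c - w) ^ 2 * ((x - r) ^ 2 + i ^ 2) - (x - w) ^ 2 * ((c - r) ^ 2 + i ^ 2) =
      (r - w) * (c - x) * ((c - w) * (s - x) + (x - w) * (s - c)) := by
  linear_combination ((x - c) * ((x - w) + (c - w))) * hs

/- `(s - a) * B = (s - b) * A + (s - w) * (b - a) * (s - x)` for the two bracketed factors `A`, `B`,
and `s - a`, `s - b`, `s - x` all have the same sign. -/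
theorem cross_term_nonpos_or_nonneg_of_notMem_Icc {w s ρ a x b : ℝ} (hρ : 0 < ρ * (s - w))
    (hax : a ≤ x) (hxb : x ≤ b) (hs : s ∉ Icc a b) :
    ρ * ((a - w) * (s - x) + (x - w) * (s - a)) ≤ 0 ∨
      0 ≤ ρ * ((b - w) * (s - x) + (x - w) * (s - b)) := by
  by_contra! h
  obtain ⟨hA, hB⟩ := h
  have hsides : 0 < (s - a) * (s - x) ∧ 0 < (s - b) * (s - x) := by
    rw [mem_Icc, not_and_or, not_le, not_le] at hs
    rcases hs with hsa | hbs
    · constructor <;> nlinarith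
    · constructor <;> nlinarith
  nlinarith [mul_pos hsides.2 hA, mul_neg_of_pos_of_neg hsides.1 hB,
    mul_nonneg hρ.le (mul_nonneg (sub_nonneg.2 (hax.trans hxb)) (sq_nonneg (s - x)))]

theorem norm_hwz_le_max {w a b x : ℝ} {z : ℂ} (hz : z.im ≠ 0) (hre : z.re ≠ w)
    (hx : x ∈ Icc a b) (hs : xStar w z ∉ Icc a b) :
    ‖hwz w z x‖ ≤ max ‖hwz w z a‖ ‖hwz w z b‖ := by
  have hsr := xStar_sub_re_mul hre
  have hρ : 0 < (z.re - w) * (xStar w z - w) := by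
    have : 0 < (z.re - w) ^ 2 + z.im ^ 2 := by positivity
    linear_combination this - hsr
  rcases cross_term_nonpos_or_nonneg_of_notMem_Icc hρ hx.1 hx.2 hs with hA | hB
  · refine le_max_of_le_left (norm_hwz_le_norm_hwz hz ?_)
    nlinarith [sq_mul_sub_sq_mul_eq hsr x a,
      mul_nonneg_of_nonpos_of_nonpos (sub_nonpos.2 hx.1) hA]
  · refine le_max_of_le_right (norm_hwz_le_norm_hwz hz ?_)
    nlinarith [sq_mul_sub_sq_mul_eq hsr x b, mul_nonneg (sub_nonneg.2 hx.2) hB]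

theorem sup_h_wz_on_interval (a b w : ℝ) (hab : a ≤ b) (z : ℂ)
    (him : z.im ≠ 0) (hre : z.re ≠ w) :
    sSup ((fun x : ℝ => ‖((x : ℂ) - (w : ℂ)) / ((x : ℂ) - z)‖) '' Set.Icc a b) =
      max (max (|a - w| / ‖(a : ℂ) - z‖) (|b - w| / ‖(b : ℂ) - z‖))
        (if (z.re ^ 2 + z.im ^ 2 - z.re * w) / (z.re - w) ∈ Set.Icc a b then
          ‖z - (w : ℂ)‖ / |z.im| else 0) := by
  change sSup ((fun x => ‖hwz w z x‖) '' Icc a b) = max _ (if xStar w z ∈ Icc a b then _ else _)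
  rw [← norm_hwz w z a, ← norm_hwz w z b]
  split_ifs with hs
  · rw [max_eq_right (max_le (norm_hwz_le w him a) (norm_hwz_le w him b))]
    refine IsGreatest.csSup_eq ⟨norm_hwz_xStar him hre ▸ mem_image_of_mem _ hs, ?_⟩
    rintro _ ⟨x, -, rfl⟩
    exact norm_hwz_le w him x
  · rw [max_eq_left ((norm_nonneg _).trans (le_max_left _ _))]
    refine IsGreatest.csSup_eq ⟨?_, ?_⟩
    · rcases max_choice ‖hwz w z a‖ ‖hwz w z b‖ with h | h <;> rw [h]
      exacts [mem_image_of_mem _ (left_mem_Icc.2 hab), mem_image_of_mem _ (right_mem_Icc.2 hab)]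
    · rintro _ ⟨x, hx, rfl⟩
      exact norm_hwz_le_max him hre hx hs
end

section
/- For all real numbers x ∈ [0, 3/4] and y ∈ (0, 1], one has 1/√(1 − x^y) ≤ 2/y. -/
theorem one_div_sqrt_one_sub_rpow_le (x y : ℝ) (hx : x ∈ Set.Icc (0 : ℝ) (3 / 4))
    (hy : y ∈ Set.Ioc (0 : ℝ) 1) :
    1 / Real.sqrt (1 - x ^ y) ≤ 2 / y := by
  obtain ⟨hx0, hx1⟩ := hx
  obtain ⟨hy0, hy1⟩ := hy
  have hb : (3 / 4 : ℝ) ^ y ≤ 1 + y * (-(1/4)) := by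
    have := rpow_one_add_le_one_add_mul_self (s := -(1/4)) (by norm_num) hy0.le hy1
    norm_num at this ⊢
    linarith
  have hxy : x ^ y ≤ (3 / 4 : ℝ) ^ y := Real.rpow_le_rpow hx0 hx1 hy0.le
  have h1 : (y / 2) ^ 2 ≤ 1 - x ^ y := by nlinarith
  have hs : y / 2 ≤ Real.sqrt (1 - x ^ y) := by
    have := Real.sqrt_le_sqrt h1
    rwa [Real.sqrt_sq (by linarith)] at this
  calc 1 / Real.sqrt (1 - x ^ y) ≤ 1 / (y / 2) :=
        one_div_le_one_div_of_le (by linarith) hs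
    _ = 2 / y := by field_simp
end
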